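/- For all n ≥ 1, Σ_{σ ∈ Av_n(213,321)} q^{maj σ} t^{des σ} = 1 + t·Σ_{k=1}^{n-1} k q^k. In particular #Av_n(213,321) = 1 + binomial(n,2). -/

import Mathlib

open scoped Classical

/-- `σ` contains the pattern `π`. -/
def permContains {n k : ℕ} (σ : Equiv.Perm (Fin n)) (π : Equiv.Perm (Fin k)) : Prop :=
  ∃ f : Fin k → Fin n, StrictMono f ∧ ∀ i j : Fin k, π i < π j ↔ σ (f i) < σ (f j)

/-- `σ` avoids the pattern `π`. -/
def permAvoids {n k : ℕ} (σ : Equiv.Perm (Fin n)) (π : Equiv.Perm (Fin k)) : Prop :=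
  ¬ permContains σ π

def p123 : Equiv.Perm (Fin 3) := 1
def p132 : Equiv.Perm (Fin 3) := Equiv.swap 1 2
def p213 : Equiv.Perm (Fin 3) := Equiv.swap 0 1
def p231 : Equiv.Perm (Fin 3) := finRotate 3
def p312 : Equiv.Perm (Fin 3) := (finRotate 3)⁻¹
def p321 : Equiv.Perm (Fin 3) := Equiv.swap 0 2

/-- Descent set of a permutation, as a set of (1-based) positions `i` with `a_i > a_{i+1}`. -/
def desSet {n : ℕ} (σ : Equiv.Perm (Fin n)) : Finset ℕ :=
  (Finset.Ico 1 n).filter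
    (fun i => ∀ h : i < n, σ ⟨i, h⟩ < σ ⟨i - 1, Nat.lt_of_le_of_lt (Nat.sub_le i 1) h⟩)

/-- Major index: sum of descent positions. -/
def majIdx {n : ℕ} (σ : Equiv.Perm (Fin n)) : ℕ := ∑ i ∈ desSet σ, i

/-- Number of descents. -/
def desNum {n : ℕ} (σ : Equiv.Perm (Fin n)) : ℕ := (desSet σ).card

/-- Number of inversions. -/
def invNum {n : ℕ} (σ : Equiv.Perm (Fin n)) : ℕ :=
  ((Finset.univ : Finset (Fin n × Fin n)).filter (fun p => p.1 < p.2 ∧ σ p.2 < σ p.1)).card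

/-! Every inversion of a permutation avoiding 213 and 321 starts before any inversion ends,
so such a permutation increases on `[0, e)` and on `[e, n)`, where `e` is the first position
ending an inversion. Counting, for each position, the positions carrying smaller values then
determines the permutation from `e` and `c = σ e`: unless it is the identity, it is
`blockSwap n c e` with `c < e < n`, whose only descent is at `e`. So every `k ∈ [1, n - 1]`
contributes `k` permutations with `maj = k` and `des = 1`. -/

open Finset

section PatternContainment

variable {n : ℕ} (σ : Equiv.Perm (Fin n))

theorem permContains_iff_strictMono {k : ℕ} (π : Equiv.Perm (Fin k)) :
    permContains σ π ↔ ∃ f : Fin k → Fin n, StrictMono f ∧ StrictMono (σ ∘ f ∘ π.symm) := by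
  refine exists_congr fun f => and_congr_right fun _ => ⟨fun h i j hij => ?_, fun h i j => ?_⟩
  · simpa using (h (π.symm i) (π.symm j)).1 (by simpa using hij)
  · simpa using (h.lt_iff_lt (a := π i) (b := π j)).symm

theorem strictMono_vec3_iff {α : Type*} [Preorder α] {a b c : α} :
    StrictMono ![a, b, c] ↔ a < b ∧ b < c := by
  rw [Fin.strictMono_iff_lt_succ]
  refine ⟨fun h => ⟨h 0, h 1⟩, fun h i => ?_⟩
  fin_cases i
  exacts [h.1, h.2]

theorem permContains_iff_exists_lt_lt (π : Equiv.Perm (Fin 3)) :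
    permContains σ π ↔ ∃ p q r, p < q ∧ q < r ∧ StrictMono (σ ∘ ![p, q, r] ∘ π.symm) := by
  rw [permContains_iff_strictMono]
  constructor
  · rintro ⟨f, hf, hσ⟩
    have hf_eq : ![f 0, f 1, f 2] = f := by funext i; fin_cases i <;> rfl
    exact ⟨f 0, f 1, f 2, hf (by decide), hf (by decide), hf_eq ▸ hσ⟩
  · rintro ⟨p, q, r, hpq, hqr, hσ⟩
    exact ⟨_, strictMono_vec3_iff.2 ⟨hpq, hqr⟩, hσ⟩

theorem permContains_p213_iff :
    permContains σ p213 ↔ ∃ p q r, p < q ∧ q < r ∧ σ q < σ p ∧ σ p < σ r := by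
  rw [permContains_iff_exists_lt_lt]
  refine exists₃_congr fun p q r => and_congr_right' <| and_congr_right' ?_
  rw [← strictMono_vec3_iff]
  exact Iff.of_eq (congrArg _ (by funext i; fin_cases i <;> rfl))

theorem permContains_p321_iff :
    permContains σ p321 ↔ ∃ p q r, p < q ∧ q < r ∧ σ q < σ p ∧ σ r < σ q := by
  rw [permContains_iff_exists_lt_lt]
  refine exists₃_congr fun p q r => and_congr_right' <| and_congr_right' ?_
  rw [and_comm, ← strictMono_vec3_iff]
  exact Iff.of_eq (congrArg _ (by funext i; fin_cases i <;> rfl))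

end PatternContainment

section Counting

variable {n : ℕ} (σ : Equiv.Perm (Fin n))

theorem card_filter_apply_lt (x : Fin n) : #{p | σ p < σ x} = σ x := by
  rw [← Fin.card_Iio]
  exact card_equiv σ (by simp)

theorem card_filter_apply_lt_add_card_filter_apply_lt (e x : Fin n) :
    #{p | p < e ∧ σ p < σ x} + #{p | e ≤ p ∧ σ p < σ x} = σ x := by
  rw [← card_filter_apply_lt σ x, ← card_filter_add_card_filter_not (s := {p | σ p < σ x}) (· < e),
    filter_filter, filter_filter]
  simp only [not_lt, and_comm]

theorem eq_one_of_strictMono (hσ : StrictMono σ) : σ = 1 :=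
  Equiv.ext <| congrFun <| (hσ.range_inj strictMono_id).1 (by simp [σ.surjective.range_eq])

end Counting

/-- In one-line notation `blockSwap n c k` is `0 … c-1 | c+n-k … n-1 | c … c+n-k-1`: the identity
word with its adjacent value blocks `[c, c+n-k)` and `[c+n-k, n)` exchanged. -/
def blockSwapFun (n c k i : ℕ) : ℕ :=
  if i < c then i else if i < k then i + (n - k) else i - (k - c)

theorem blockSwapFun_lt {n c k i : ℕ} (hi : i < n) : blockSwapFun n c k i < n := by
  unfold blockSwapFun; split_ifs <;> omega

theorem blockSwapFun_injOn (n c k : ℕ) : Set.InjOn (blockSwapFun n c k) (Set.Iio n) := by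
  intro i hi j hj h
  simp only [Set.mem_Iio] at hi hj
  unfold blockSwapFun at h; split_ifs at h <;> omega

noncomputable def blockSwap (n c k : ℕ) : Equiv.Perm (Fin n) :=
  Equiv.ofBijective (fun i => ⟨blockSwapFun n c k i, blockSwapFun_lt i.isLt⟩) <|
    Finite.injective_iff_bijective.1 fun i j h =>
      Fin.ext (blockSwapFun_injOn n c k i.isLt j.isLt (Fin.mk.inj h))

@[simp]
theorem blockSwap_apply_val (n c k : ℕ) (i : Fin n) :
    (blockSwap n c k i : ℕ) = blockSwapFun n c k i := rfl

section Avoiders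

variable {n : ℕ} {σ : Equiv.Perm (Fin n)}

theorem lt_of_inversion_of_inversion (h213 : permAvoids σ p213) (h321 : permAvoids σ p321)
    {p q r s : Fin n} (hpq : p < q) (hqp : σ q < σ p) (hrs : r < s) (hsr : σ s < σ r) : r < q := by
  by_contra! hqr
  rcases hqr.eq_or_lt with rfl | hqr
  · exact h321 ((permContains_p321_iff σ).2 ⟨p, q, s, hpq, hrs, hqp, hsr⟩)
  rcases lt_or_gt_of_ne (σ.injective.ne (hpq.trans hqr).ne) with hpr | hrp
  · exact h213 ((permContains_p213_iff σ).2 ⟨p, q, r, hpq, hqr, hqp, hpr⟩)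
  · exact h321 ((permContains_p321_iff σ).2 ⟨p, r, s, hpq.trans hqr, hrs, hrp, hsr⟩)

theorem exists_strictMonoOn_Iio_Ici (h213 : permAvoids σ p213) (h321 : permAvoids σ p321)
    (hσ : σ ≠ 1) :
    ∃ e, StrictMonoOn σ (Set.Iio e) ∧ StrictMonoOn σ (Set.Ici e) ∧ ∃ p < e, σ e < σ p := by
  have inv_of_not_lt {a b : Fin n} (hab : a < b) (h : ¬ σ a < σ b) : σ b < σ a :=
    lt_of_le_of_ne (not_lt.1 h) (σ.injective.ne hab.ne')
  set bottoms := ({q | ∃ p < q, σ q < σ p} : Finset (Fin n))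
  have hne : bottoms.Nonempty := by
    by_contra! h
    refine hσ (eq_one_of_strictMono σ fun a b hab => ?_)
    by_contra hσab
    simpa [h] using (show b ∈ bottoms by simpa [bottoms] using ⟨a, hab, inv_of_not_lt hab hσab⟩)
  set e := bottoms.min' hne
  have he : ∃ p < e, σ e < σ p := (mem_filter.1 (bottoms.min'_mem hne)).2
  refine ⟨e, fun a ha b hb hab => ?_, fun a ha b hb hab => ?_, he⟩
  · by_contra hσab
    have hb' : b ∈ bottoms := by simpa [bottoms] using ⟨a, hab, inv_of_not_lt hab hσab⟩
    exact (Set.mem_Iio.1 hb).not_ge (bottoms.min'_le b hb')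
  · by_contra hσab
    obtain ⟨p, hpe, hep⟩ := he
    exact (Set.mem_Ici.1 ha).not_gt
      (lt_of_inversion_of_inversion h213 h321 hpe hep hab (inv_of_not_lt hab hσab))

section Blocks

variable {e : Fin n} (hlo : StrictMonoOn σ (Set.Iio e)) (hhi : StrictMonoOn σ (Set.Ici e))
  (h213 : permAvoids σ p213)
include hhi h213

theorem apply_lt_apply_iff_of_lt_of_le {p j : Fin n} (hp : p < e) (hj : e ≤ j) :
    σ p < σ j ↔ σ p < σ e := by
  refine ⟨fun h => ?_, fun h => h.trans_le (hhi.monotoneOn Set.self_mem_Ici hj hj)⟩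
  rcases hj.eq_or_lt with rfl | hj
  · exact h
  by_contra hpe
  have hep : σ e < σ p := lt_of_le_of_ne (not_lt.1 hpe) (σ.injective.ne hp.ne')
  exact h213 ((permContains_p213_iff σ).2 ⟨p, e, j, hp, hj, hep, h⟩)

theorem val_apply_of_le {x : Fin n} (hx : e ≤ x) : (σ x : ℕ) = σ e + (x - e) := by
  have hlow : #{p | p < e ∧ σ p < σ x} = #{p | p < e ∧ σ p < σ e} := by
    congr 1; ext p; simp only [mem_filter, mem_univ, true_and]
    exact and_congr_right fun hp => apply_lt_apply_iff_of_lt_of_le hhi h213 hp hx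
  have hhigh (y : Fin n) (hy : e ≤ y) : #{p | e ≤ p ∧ σ p < σ y} = y - e := by
    rw [← Fin.card_Ico]; congr 1; ext p
    simp only [mem_filter, mem_univ, true_and, mem_Ico]
    exact and_congr_right fun hp => hhi.lt_iff_lt hp hy
  have hx' := card_filter_apply_lt_add_card_filter_apply_lt σ e x
  have he' := card_filter_apply_lt_add_card_filter_apply_lt σ e e
  rw [hlow, hhigh x hx] at hx'
  rw [hhigh e le_rfl] at he'
  omega

theorem apply_lt_apply_iff_of_le_of_lt {x p : Fin n} (hx : x < e) (hp : e ≤ p) :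
    σ p < σ x ↔ σ e < σ x := by
  have hpx : σ p ≠ σ x := σ.injective.ne (hx.trans_le hp).ne'
  have hex : σ e ≠ σ x := σ.injective.ne hx.ne'
  rw [lt_iff_le_and_ne, lt_iff_le_and_ne, ← not_lt, ← not_lt,
    apply_lt_apply_iff_of_lt_of_le hhi h213 hx hp]
  simp [hpx, hex]

include hlo in
theorem val_apply_of_lt {x : Fin n} (hx : x < e) :
    (σ x : ℕ) = x + if σ e < σ x then n - e else 0 := by
  have hlow : #{p | p < e ∧ σ p < σ x} = x := by
    rw [← Fin.card_Iio]; congr 1; ext p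
    simp only [mem_filter, mem_univ, true_and, mem_Iio]
    exact ⟨fun h => (hlo.lt_iff_lt h.1 hx).1 h.2, fun h => ⟨h.trans hx, hlo (h.trans hx) hx h⟩⟩
  have hhigh : #{p | e ≤ p ∧ σ p < σ x} = if σ e < σ x then n - e else 0 := by
    split_ifs with hex
    · rw [← Fin.card_Ici]; congr 1; ext p
      simpa using fun hp => (apply_lt_apply_iff_of_le_of_lt hhi h213 hx hp).2 hex
    · rw [card_eq_zero, filter_eq_empty_iff]
      exact fun p _ ⟨hp, hpx⟩ => hex ((apply_lt_apply_iff_of_le_of_lt hhi h213 hx hp).1 hpx)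
  rw [← card_filter_apply_lt_add_card_filter_apply_lt σ e x, hlow, hhigh]

include hlo in
theorem apply_lt_apply_iff_val_lt {x : Fin n} : σ x < σ e ↔ (x : ℕ) < σ e := by
  suffices h : ({p | σ p < σ e} : Finset (Fin n)) =
      ({p : Fin n | (p : ℕ) < σ e} : Finset (Fin n)) by
    simpa using congrArg (x ∈ ·) h
  refine eq_of_subset_of_card_le (fun p hp => ?_) ?_
  · simp only [mem_filter, mem_univ, true_and] at hp ⊢
    have hpe : p < e := lt_of_not_ge fun hep => hp.not_ge (hhi.monotoneOn Set.self_mem_Ici hep hep)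
    have := val_apply_of_lt hlo hhi h213 hpe
    rw [if_neg (asymm hp), add_zero] at this
    exact this ▸ hp
  · rw [card_filter_apply_lt, Fin.card_filter_val_lt]
    exact min_le_right _ _

end Blocks

theorem exists_eq_blockSwap (h213 : permAvoids σ p213) (h321 : permAvoids σ p321) (hσ : σ ≠ 1) :
    ∃ c k, c < k ∧ k < n ∧ σ = blockSwap n c k := by
  obtain ⟨e, hlo, hhi, p, hpe, hep⟩ := exists_strictMonoOn_Iio_Ici h213 h321 hσ
  have hlt_iff (x : Fin n) := apply_lt_apply_iff_val_lt hlo hhi h213 (x := x)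
  have hce : (σ e : ℕ) < e := by
    by_contra! h
    exact hep.not_gt ((hlt_iff p).2 (lt_of_lt_of_le hpe h))
  refine ⟨σ e, e, hce, e.isLt, Equiv.ext fun x => Fin.ext ?_⟩
  rw [blockSwap_apply_val, blockSwapFun]
  rcases lt_or_ge x e with hx | hx
  · rw [val_apply_of_lt hlo hhi h213 hx]
    by_cases hxc : (x : ℕ) < σ e
    · simp [hxc, asymm ((hlt_iff x).2 hxc)]
    · have hex : σ e < σ x :=
        lt_of_le_of_ne (not_lt.1 (mt (hlt_iff x).1 hxc)) (σ.injective.ne hx.ne')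
      simp [hxc, hex, hx]
  · rw [val_apply_of_le hhi h213 hx]
    have hx' : (e : ℕ) ≤ x := hx
    split_ifs <;> omega

end Avoiders

theorem blockSwap_zero_zero (n : ℕ) : blockSwap n 0 0 = 1 := by
  ext i; simp [blockSwapFun]

theorem permAvoids_blockSwap_p213 (n c k : ℕ) : permAvoids (blockSwap n c k) p213 := by
  rw [permAvoids, permContains_p213_iff]
  rintro ⟨p, q, r, hpq, hqr, h1, h2⟩
  simp only [Fin.lt_def, blockSwap_apply_val, blockSwapFun] at *
  have := r.isLt
  split_ifs at h1 h2 <;> omega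

theorem permAvoids_blockSwap_p321 (n c k : ℕ) : permAvoids (blockSwap n c k) p321 := by
  rw [permAvoids, permContains_p321_iff]
  rintro ⟨p, q, r, hpq, hqr, h1, h2⟩
  simp only [Fin.lt_def, blockSwap_apply_val, blockSwapFun] at *
  have := r.isLt
  split_ifs at h1 h2 <;> omega

theorem desSet_blockSwap {n c k : ℕ} (hck : c < k) (hkn : k < n) :
    desSet (blockSwap n c k) = {k} := by
  ext i
  simp only [desSet, mem_filter, mem_Ico, mem_singleton, Fin.lt_def, blockSwap_apply_val,
    blockSwapFun]
  constructor
  · rintro ⟨⟨h1, h2⟩, h⟩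
    have := h h2
    split_ifs at this <;> omega
  · rintro rfl
    refine ⟨⟨by omega, hkn⟩, fun _ => ?_⟩
    split_ifs <;> omega

theorem desSet_one (n : ℕ) : desSet (1 : Equiv.Perm (Fin n)) = ∅ := by
  ext i; simp [desSet, Fin.lt_def]

def blockSwapIndex (n : ℕ) : Finset (Σ _ : ℕ, ℕ) := (Icc 1 (n - 1)).sigma range

theorem desSet_blockSwap_of_mem {n : ℕ} {kc : Σ _ : ℕ, ℕ} (hkc : kc ∈ blockSwapIndex n) :
    desSet (blockSwap n kc.2 kc.1) = {kc.1} := by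
  simp only [blockSwapIndex, mem_sigma, mem_Icc, mem_range] at hkc
  exact desSet_blockSwap hkc.2 (by omega)

theorem blockSwap_injOn (n : ℕ) :
    Set.InjOn (fun kc : Σ _ : ℕ, ℕ => blockSwap n kc.2 kc.1) (blockSwapIndex n) := by
  rintro ⟨k, c⟩ hkc ⟨k', c'⟩ hkc' h
  have hk : k = k' := by
    simpa [desSet_blockSwap_of_mem hkc, desSet_blockSwap_of_mem hkc'] using congrArg desSet h
  subst hk
  simp only [blockSwapIndex, mem_coe, mem_sigma, mem_Icc, mem_range] at hkc hkc'
  have hc := congrArg (fun σ : Equiv.Perm (Fin n) => (σ ⟨k, by omega⟩ : ℕ)) h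
  simp only [blockSwap_apply_val, blockSwapFun] at hc
  simp only [Sigma.mk.injEq, heq_eq_eq, true_and]
  split_ifs at hc <;> omega

noncomputable def avoiders (n : ℕ) : Finset (Equiv.Perm (Fin n)) :=
  Finset.univ.filter (fun σ : Equiv.Perm (Fin n) => permAvoids σ p213 ∧ permAvoids σ p321)

theorem avoiders_eq (n : ℕ) :
    avoiders n = insert 1 ((blockSwapIndex n).image fun kc => blockSwap n kc.2 kc.1) := by
  ext σ
  simp only [avoiders, blockSwapIndex, mem_filter, mem_univ, true_and, mem_insert, mem_image,
    mem_sigma, mem_Icc, mem_range, Sigma.exists]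
  constructor
  · rintro ⟨h213, h321⟩
    by_cases hσ : σ = 1
    · exact .inl hσ
    obtain ⟨c, k, hck, hkn, rfl⟩ := exists_eq_blockSwap h213 h321 hσ
    exact .inr ⟨k, c, ⟨⟨by omega, by omega⟩, hck⟩, rfl⟩
  · rintro (rfl | ⟨k, c, -, rfl⟩)
    · rw [← blockSwap_zero_zero]
      exact ⟨permAvoids_blockSwap_p213 n 0 0, permAvoids_blockSwap_p321 n 0 0⟩
    · exact ⟨permAvoids_blockSwap_p213 n c k, permAvoids_blockSwap_p321 n c k⟩

theorem sum_avoiders {R : Type*} [CommSemiring R] (n : ℕ) (q t : R) :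
    ∑ σ ∈ avoiders n, q ^ majIdx σ * t ^ desNum σ =
      1 + t * ∑ k ∈ Icc 1 (n - 1), (k : R) * q ^ k := by
  have hterm (kc) (hkc : kc ∈ blockSwapIndex n) :
      q ^ majIdx (blockSwap n kc.2 kc.1) * t ^ desNum (blockSwap n kc.2 kc.1) = q ^ kc.1 * t := by
    simp [majIdx, desNum, desSet_blockSwap_of_mem hkc]
  have hone : 1 ∉ (blockSwapIndex n).image fun kc => blockSwap n kc.2 kc.1 := by
    simp only [mem_image, not_exists, not_and]
    intro kc hkc h
    simpa [desSet_one, desSet_blockSwap_of_mem hkc] using congrArg desSet h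
  rw [avoiders_eq, sum_insert hone, sum_image (blockSwap_injOn n), sum_congr rfl hterm,
    blockSwapIndex, sum_sigma, mul_sum]
  simp only [majIdx, desNum, desSet_one, sum_empty, card_empty, pow_zero, mul_one, sum_const,
    card_range, nsmul_eq_mul]
  exact congrArg _ (sum_congr rfl fun k _ => by ring)

theorem sum_Icc_one_sub_one_id (n : ℕ) : ∑ k ∈ Icc 1 (n - 1), k = n.choose 2 := by
  rw [Nat.choose_two_right, ← sum_range_id]
  exact sum_subset (fun k hk => by simp at hk ⊢; omega) (fun k hk hk' => by simp at hk hk'; omega)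

theorem card_avoiders (n : ℕ) : #(avoiders n) = 1 + n.choose 2 := by
  simpa [← sum_Icc_one_sub_one_id] using sum_avoiders (R := ℕ) n 1 1

theorem maj_des_213_321_general (n : ℕ) :
    (∀ q t : ℚ,
      ∑ σ ∈ Finset.univ.filter
          (fun σ : Equiv.Perm (Fin n) => permAvoids σ p213 ∧ permAvoids σ p321),
        q ^ majIdx σ * t ^ desNum σ
        = 1 + t * ∑ k ∈ Finset.Icc 1 (n - 1), (k : ℚ) * q ^ k) ∧
    (Finset.univ.filter
        (fun σ : Equiv.Perm (Fin n) => permAvoids σ p213 ∧ permAvoids σ p321)).card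
      = 1 + n.choose 2 :=
  ⟨sum_avoiders n, card_avoiders n⟩

theorem maj_des_213_321 (n : ℕ) (hn : 1 ≤ n) :
    (∀ q t : ℚ,
      ∑ σ ∈ Finset.univ.filter
          (fun σ : Equiv.Perm (Fin n) => permAvoids σ p213 ∧ permAvoids σ p321),
        q ^ majIdx σ * t ^ desNum σ
        = 1 + t * ∑ k ∈ Finset.Icc 1 (n - 1), (k : ℚ) * q ^ k) ∧
    (Finset.univ.filter
        (fun σ : Equiv.Perm (Fin n) => permAvoids σ p213 ∧ permAvoids σ p321)).card
      = 1 + n.choose 2 :=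
  maj_des_213_321_general n
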